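/- Adopt the FAVOR+S binding setup: fix integers D, M, N ≥ 1, a fixed channel (u, n) ∈ {1,…,M}×{1,…,N} and positions i, j; for each channel pair (m, w) ∈ {1,…,M}×{1,…,N} let k̄_j^{(m,w)} ∈ ℝ^D and q̄_i^{(m,w)} ∈ ℝ^D be fixed vectors and let a^{(m,w)} ∈ {−1,+1}^D be mutually independent random vectors with i.i.d. Rademacher entries; define k_j^{(m,w)} = k̄_j^{(m,w)} ⊙ a^{(m,w)} and q_i^{(m,w)} = q̄_i^{(m,w)} ⊙ a^{(m,w)}. Let α > 0, assume ⟨k̄_j^{(u,n)}, q̄_i^{(u,n)}⟩ ≠ 0, and let P = ℙ{ ⟨Σ_{w=1}^N k_j^{(u,w)}, Σ_{t=1}^M q_i^{(t,n)}⟩ ∉ [1−α, 1+α]·⟨k̄_j^{(u,n)}, q̄_i^{(u,n)}⟩ }. For (t, w) with (u, w) ≠ (t, n) set Ξ_{(u,w)}^{(t,n)} = α²·⟨k̄_j^{(u,n)}, q̄_i^{(u,n)}⟩² / Σ_{p=1}^D (k̄_j^{(u,w)})_p²·(q̄_i^{(t,n)})_p². Then P ≤ Σ_{w=1}^N √( Σ_{t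 ∈ {1,…,M}, (u,w) ≠ (t,n)} 1/Ξ_{(u,w)}^{(t,n)} ). -/

import Mathlib

open MeasureTheory ProbabilityTheory
open scoped ENNReal NNReal

noncomputable def rademacherMeasure : Measure ℝ :=
  (2 : ℝ≥0∞)⁻¹ • Measure.dirac (1 : ℝ) + (2 : ℝ≥0∞)⁻¹ • Measure.dirac (-1 : ℝ)

noncomputable def Xi (D : ℕ) (α c : ℝ) (kb qb : Fin D → ℝ) : ℝ :=
  α ^ 2 * c ^ 2 / ∑ p, (kb p) ^ 2 * (qb p) ^ 2

lemma rademacher_int_id : ∫ x, x ∂rademacherMeasure = 0 := by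
  have h1 : ∀ y : ℝ, Integrable (fun x : ℝ => x) ((2 : ℝ≥0∞)⁻¹ • Measure.dirac y) := by
    intro y
    have h0 : (fun x : ℝ => x) =ᵐ[Measure.dirac y] (fun _ => y) := ae_eq_dirac (fun x : ℝ => x)
    have : Integrable (fun x : ℝ => x) (Measure.dirac y) := (integrable_const y).congr h0.symm
    exact this.smul_measure (by norm_num)
  rw [rademacherMeasure, integral_add_measure (h1 1) (h1 (-1)), integral_smul_measure,
    integral_smul_measure, integral_dirac, integral_dirac]
  norm_num

/-- **FAVOR+S inter-channel noise, first Khintchine/Markov bound.**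
`P ≤ ∑_{w=1}^N √( ∑_{t, (u,w)≠(t,n)} 1/Ξ_{(u,w)}^{(t,n)} )`. -/
theorem stmt_8 {Ω : Type*} [MeasurableSpace Ω] (μ : Measure Ω) [IsProbabilityMeasure μ]
    (D M N : ℕ) (hD : 1 ≤ D) (hM : 1 ≤ M) (hN : 1 ≤ N)
    (u : Fin M) (n : Fin N)
    (kbar qbar : Fin M × Fin N → Fin D → ℝ)
    (a : Fin M × Fin N → Ω → Fin D → ℝ)
    (haval : ∀ c ω d, a c ω d = 1 ∨ a c ω d = -1)
    (hameas : ∀ c d, Measurable fun ω => a c ω d)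
    (hindep : iIndepFun
      (fun (p : (Fin M × Fin N) × Fin D) ω => a p.1 ω p.2) μ)
    (hadist : ∀ c d, Measure.map (fun ω => a c ω d) μ = rademacherMeasure)
    (α : ℝ) (hα : 0 < α)
    (hsig : (∑ d, kbar (u, n) d * qbar (u, n) d) ≠ 0) :
    μ {ω | (∑ d, (∑ w, kbar (u, w) d * a (u, w) ω d) * (∑ t, qbar (t, n) d * a (t, n) ω d)) ∉
        (fun s => s * ∑ d, kbar (u, n) d * qbar (u, n) d) '' Set.Icc (1 - α) (1 + α)} ≤
      ENNReal.ofReal (∑ w : Fin N, Real.sqrt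
        (∑ t ∈ Finset.univ.filter (fun t : Fin M => ((u, w) : Fin M × Fin N) ≠ (t, n)),
          1 / Xi D α (∑ d, kbar (u, n) d * qbar (u, n) d) (kbar (u, w)) (qbar (t, n)))) := by
  classical
  set c : ℝ := ∑ d, kbar (u, n) d * qbar (u, n) d with hcdef
  set f : (Fin M × Fin N) × Fin D → Ω → ℝ := fun p ω => a p.1 ω p.2 with hfdef
  have hfmeas : ∀ p, Measurable (f p) := fun p => hameas p.1 p.2
  have hsq : ∀ p ω, f p ω * f p ω = 1 := by
    intro p ω; rcases haval p.1 ω p.2 with h | h <;> simp [hfdef, h]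
  have habs : ∀ p ω, |f p ω| ≤ 1 := by
    intro p ω; rcases haval p.1 ω p.2 with h | h <;> simp [hfdef, h]
  have hbd : ∀ (g : Ω → ℝ), Measurable g → (∀ ω, |g ω| ≤ 1) → Integrable g μ := by
    intro g hm hb
    exact (integrable_const (1:ℝ)).mono' hm.aestronglyMeasurable
      (Filter.Eventually.of_forall fun ω => by simpa using hb ω)
  have hE0 : ∀ p, ∫ ω, f p ω ∂μ = 0 := by
    intro p
    have h1 := integral_map (μ := μ) (φ := fun ω => a p.1 ω p.2) (f := fun x : ℝ => x)
      (hameas p.1 p.2).aemeasurable aestronglyMeasurable_id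
    rw [show (∫ ω, f p ω ∂μ) = ∫ ω, a p.1 ω p.2 ∂μ from rfl, ← h1, hadist p.1 p.2,
      rademacher_int_id]
  have hpair : ∀ p q : (Fin M × Fin N) × Fin D, p ≠ q → ∫ ω, f p ω * f q ω ∂μ = 0 := by
    intro p q hpq
    have := (hindep.indepFun hpq).integral_fun_mul_eq_mul_integral
      (hfmeas p).aestronglyMeasurable (hfmeas q).aestronglyMeasurable
    rw [this, hE0, hE0, mul_zero]
  have hquad : ∀ p q r s : (Fin M × Fin N) × Fin D, p ≠ r → p ≠ s → q ≠ r → q ≠ s → p ≠ q →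
      ∫ ω, (f p ω * f q ω) * (f r ω * f s ω) ∂μ = 0 := by
    intro p q r s hpr hps hqr hqs hpq
    have h1 := (hindep.indepFun_mul_mul hfmeas p q r s hpr hps hqr hqs).integral_fun_mul_eq_mul_integral
      ((hfmeas p).mul (hfmeas q)).aestronglyMeasurable
      ((hfmeas r).mul (hfmeas s)).aestronglyMeasurable
    simp only [Pi.mul_apply] at h1
    have h2 : integral μ (f p * f q) = ∫ ω, f p ω * f q ω ∂μ := rfl
    have h3 : integral μ (f r * f s) = ∫ ω, f r ω * f s ω ∂μ := rfl
    rw [h1, hpair p q hpq, zero_mul]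
  have hsqa : ∀ ch ω d, a ch ω d * a ch ω d = 1 := by
    intro ch ω d; rcases haval ch ω d with h | h <;> simp [h]
  set F : Fin N → Finset (Fin M) :=
    fun w => Finset.univ.filter (fun t : Fin M => ((u, w) : Fin M × Fin N) ≠ (t, n)) with hFdef
  set Y : Fin N → Ω → ℝ := fun w ω => ∑ t ∈ F w, ∑ d,
    (kbar (u, w) d * qbar (t, n) d) * (a (u, w) ω d * a (t, n) ω d) with hYdef
  have hFt : ∀ w, ∀ t ∈ F w, ((u, w) : Fin M × Fin N) ≠ (t, n) := by
    intro w t ht; exact (Finset.mem_filter.mp ht).2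
  have hS : ∀ ω, (∑ d, (∑ w, kbar (u, w) d * a (u, w) ω d) * (∑ t, qbar (t, n) d * a (t, n) ω d))
      = c + ∑ w, Y w ω := by
    intro ω
    have e1 : ∀ d : Fin D, (∑ w, kbar (u, w) d * a (u, w) ω d) * (∑ t, qbar (t, n) d * a (t, n) ω d)
        = ∑ w, ∑ t, (kbar (u, w) d * qbar (t, n) d) * (a (u, w) ω d * a (t, n) ω d) := by
      intro d
      rw [Finset.sum_mul_sum]
      exact Finset.sum_congr rfl fun w _ => Finset.sum_congr rfl fun t _ => by ring
    have e2 : ∀ w : Fin N, (∑ t : Fin M, ∑ d,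
          (kbar (u, w) d * qbar (t, n) d) * (a (u, w) ω d * a (t, n) ω d))
        = (if w = n then c else 0) + Y w ω := by
      intro w
      rw [← Finset.sum_filter_add_sum_filter_not Finset.univ
        (fun t : Fin M => ((u, w) : Fin M × Fin N) ≠ (t, n)), add_comm]
      congr 1
      by_cases hw : w = n
      · subst hw
        have hfil : Finset.univ.filter
            (fun t : Fin M => ¬((u, w) : Fin M × Fin N) ≠ (t, w)) = {u} := by
          ext t; simp [Prod.ext_iff, eq_comm]
        rw [if_pos rfl, hfil, Finset.sum_singleton, hcdef]
        exact Finset.sum_congr rfl fun d _ => by rw [hsqa, mul_one]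
      · have hfil : Finset.univ.filter
            (fun t : Fin M => ¬((u, w) : Fin M × Fin N) ≠ (t, n)) = ∅ := by
          ext t; simp [Prod.ext_iff, hw]
        rw [if_neg hw, hfil, Finset.sum_empty]
    calc (∑ d, (∑ w, kbar (u, w) d * a (u, w) ω d) * (∑ t, qbar (t, n) d * a (t, n) ω d))
        = ∑ d, ∑ w, ∑ t, (kbar (u, w) d * qbar (t, n) d) * (a (u, w) ω d * a (t, n) ω d) :=
          Finset.sum_congr rfl fun d _ => e1 d
      _ = ∑ w, ∑ t : Fin M, ∑ d, (kbar (u, w) d * qbar (t, n) d) * (a (u, w) ω d * a (t, n) ω d) := by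
          rw [Finset.sum_comm]
          exact Finset.sum_congr rfl fun w _ => Finset.sum_comm

      _ = ∑ w : Fin N, ((if w = n then c else 0) + Y w ω) :=
          Finset.sum_congr rfl fun w _ => e2 w
      _ = c + ∑ w, Y w ω := by
          rw [Finset.sum_add_distrib, Finset.sum_ite_eq' Finset.univ n (fun _ => c)]
          simp
  set ζ : Fin N → Fin M × Fin D → Ω → ℝ :=
    fun w r ω => f ((u, w), r.2) ω * f ((r.1, n), r.2) ω with hzdef
  set coef : Fin N → Fin M × Fin D → ℝ :=
    fun w r => kbar (u, w) r.2 * qbar (r.1, n) r.2 with hcoefdef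
  set G : Fin N → Finset (Fin M × Fin D) := fun w => (F w) ×ˢ Finset.univ with hGdef
  have hYG : ∀ w ω, Y w ω = ∑ r ∈ G w, coef w r * ζ w r ω := by
    intro w ω
    simp only [hYdef, hGdef, hcoefdef, hzdef, hfdef]
    rw [Finset.sum_product]
  have hzmeas : ∀ w r, Measurable (ζ w r) := fun w r =>
    (hfmeas ((u, w), r.2)).mul (hfmeas ((r.1, n), r.2))
  have hzbound : ∀ w r ω, |ζ w r ω| ≤ 1 := by
    intro w r ω
    simp only [hzdef]
    rw [abs_mul]
    exact mul_le_one₀ (habs _ _) (abs_nonneg _) (habs _ _)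
  have hI : ∀ w, ∀ r ∈ G w, ∀ r' ∈ G w,
      ∫ ω, ζ w r ω * ζ w r' ω ∂μ = (if r = r' then 1 else 0) := by
    intro w r hr r' hr'
    obtain ⟨t, d⟩ := r; obtain ⟨t', d'⟩ := r'
    have ht : ((u, w) : Fin M × Fin N) ≠ (t, n) := hFt w t (Finset.mem_product.mp hr).1
    have ht' : ((u, w) : Fin M × Fin N) ≠ (t', n) := hFt w t' (Finset.mem_product.mp hr').1
    by_cases heq : ((t, d) : Fin M × Fin D) = (t', d')
    · rw [if_pos heq]
      cases heq
      have hpt : ∀ ω, ζ w (t, d) ω * ζ w (t, d) ω = 1 := by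
        intro ω
        simp only [hzdef]
        rw [show (f ((u, w), d) ω * f ((t, n), d) ω) * (f ((u, w), d) ω * f ((t, n), d) ω)
            = (f ((u, w), d) ω * f ((u, w), d) ω) * (f ((t, n), d) ω * f ((t, n), d) ω) from
            by ring, hsq, hsq, one_mul]
      rw [integral_congr_ae (Filter.Eventually.of_forall hpt)]
      simp
    · rw [if_neg heq]
      by_cases hd : d = d'
      · subst hd
        have htt' : t ≠ t' := fun h => heq (by rw [h])
        have hpt : ∀ ω, ζ w (t, d) ω * ζ w (t', d) ω
            = f ((t, n), d) ω * f ((t', n), d) ω := by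
          intro ω
          simp only [hzdef]
          rw [show f ((u, w), d) ω * f ((t, n), d) ω * (f ((u, w), d) ω * f ((t', n), d) ω)
              = (f ((u, w), d) ω * f ((u, w), d) ω) * (f ((t, n), d) ω * f ((t', n), d) ω) from
              by ring, hsq, one_mul]
        rw [integral_congr_ae (Filter.Eventually.of_forall hpt)]
        exact hpair _ _ (fun h => htt' (congrArg (fun x => x.1.1) h))
      · have := hquad ((u, w), d) ((t, n), d) ((u, w), d') ((t', n), d')
          (fun h => hd (congrArg Prod.snd h))
          (fun h => ht' (congrArg Prod.fst h))
          (fun h => hd (congrArg Prod.snd h))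
          (fun h => hd (congrArg Prod.snd h))
          (fun h => ht (congrArg Prod.fst h))
        simpa only [hzdef] using this
  have hYmeas : ∀ w, Measurable (Y w) := by
    intro w
    simp only [hYdef]
    exact Finset.measurable_sum _ fun t _ => Finset.measurable_sum _ fun d _ =>
      ((hameas (u, w) d).mul (hameas (t, n) d)).const_mul _
  have hYbound : ∀ w ω, |Y w ω| ≤ ∑ r ∈ G w, |coef w r| := by
    intro w ω
    rw [hYG]
    refine (Finset.abs_sum_le_sum_abs _ _).trans (Finset.sum_le_sum fun r _ => ?_)
    rw [abs_mul]
    exact mul_le_of_le_one_right (abs_nonneg _) (hzbound w r ω)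
  have hYmem2 : ∀ w, MemLp (Y w) 2 μ := fun w =>
    MemLp.of_bound (hYmeas w).aestronglyMeasurable _
      (Filter.Eventually.of_forall fun ω => by simpa using hYbound w ω)
  have hEY2 : ∀ w, ∫ ω, (Y w ω) ^ 2 ∂μ = ∑ r ∈ G w, (coef w r) ^ 2 := by
    intro w
    have hsq2 : ∀ ω, (Y w ω) ^ 2 = ∑ r ∈ G w, ∑ r' ∈ G w,
        (coef w r * coef w r') * (ζ w r ω * ζ w r' ω) := by
      intro ω
      rw [hYG, sq, Finset.sum_mul_sum]
      exact Finset.sum_congr rfl fun r _ => Finset.sum_congr rfl fun r' _ => by ring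
    have hint : ∀ r r' : Fin M × Fin D, Integrable
        (fun ω => (coef w r * coef w r') * (ζ w r ω * ζ w r' ω)) μ := by
      intro r r'
      exact (hbd _ ((hzmeas w r).mul (hzmeas w r')) (fun ω => by
        rw [Pi.mul_apply, abs_mul]
        exact mul_le_one₀ (hzbound w r ω) (abs_nonneg _) (hzbound w r' ω))).const_mul _
    calc ∫ ω, (Y w ω) ^ 2 ∂μ
        = ∫ ω, ∑ r ∈ G w, ∑ r' ∈ G w, (coef w r * coef w r') * (ζ w r ω * ζ w r' ω) ∂μ :=
          integral_congr_ae (Filter.Eventually.of_forall hsq2)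
      _ = ∑ r ∈ G w, ∑ r' ∈ G w, (coef w r * coef w r') * ∫ ω, ζ w r ω * ζ w r' ω ∂μ := by
          rw [integral_finset_sum _ fun r _ => integrable_finset_sum _ fun r' _ => hint r r']
          exact Finset.sum_congr rfl fun r _ => by
            rw [integral_finset_sum _ fun r' _ => hint r r']
            exact Finset.sum_congr rfl fun r' _ => integral_const_mul _ _
      _ = ∑ r ∈ G w, (coef w r) ^ 2 := by
          refine Finset.sum_congr rfl fun r hr => ?_
          rw [Finset.sum_congr rfl (fun r' hr' => by
            rw [hI w r hr r' hr', mul_ite, mul_one, mul_zero])]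
          rw [Finset.sum_ite_eq (G w) r fun r' => coef w r * coef w r', if_pos hr, sq]
  have hEabsY : ∀ w, ∫ ω, |Y w ω| ∂μ ≤ Real.sqrt (∑ r ∈ G w, (coef w r) ^ 2) := by
    intro w
    have hmem : MemLp (fun ω => |Y w ω|) 2 μ := by
      have := (hYmem2 w).abs
      simpa [Pi.abs_def] using this
    have hvar := variance_nonneg (fun ω => |Y w ω|) μ
    rw [variance_eq_sub hmem] at hvar
    have h1 : (∫ ω, ((fun ω => |Y w ω|) ^ 2) ω ∂μ) = ∫ ω, (Y w ω) ^ 2 ∂μ :=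
      integral_congr_ae (Filter.Eventually.of_forall fun ω => by simp [sq_abs])
    refine Real.le_sqrt_of_sq_le ?_
    rw [← hEY2 w, ← h1]
    have h2 : (∫ ω, ((fun ω => |Y w ω|)) ω ∂μ) = ∫ ω, |Y w ω| ∂μ := rfl
    nlinarith [hvar]
  set Zf : Ω → ℝ := fun ω => ∑ w, Y w ω with hZdef
  have hYint : ∀ w, Integrable (Y w) μ := fun w => (hYmem2 w).integrable (by norm_num)
  have hZint : Integrable Zf μ := integrable_finset_sum _ fun w _ => hYint w
  have hcpos : 0 < |c| := abs_pos.mpr hsig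
  have habspos : 0 < α * |c| := mul_pos hα hcpos
  have hsub : {ω | (∑ d, (∑ w, kbar (u, w) d * a (u, w) ω d) *
        (∑ t, qbar (t, n) d * a (t, n) ω d)) ∉
      (fun s => s * c) '' Set.Icc (1 - α) (1 + α)} ⊆ {ω | α * |c| ≤ |Zf ω|} := by
    intro ω hω
    simp only [Set.mem_setOf_eq] at hω ⊢
    by_contra hcon
    push_neg at hcon
    apply hω
    refine ⟨(c + Zf ω) / c, ?_, ?_⟩
    · have h1 : |(c + Zf ω) / c - 1| ≤ α := by
        rw [show (c + Zf ω) / c - 1 = Zf ω / c from by field_simp; ring, abs_div, div_le_iff₀ hcpos]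
        nlinarith [hcon]
      obtain ⟨hl, hr⟩ := abs_le.mp h1
      exact Set.mem_Icc.mpr ⟨by linarith, by linarith⟩
    · show (c + Zf ω) / c * c = _
      rw [div_mul_cancel₀ _ hsig, hS ω]
  have hmark := mul_meas_ge_le_integral_of_nonneg
    (ae_of_all μ fun ω => abs_nonneg (Zf ω)) hZint.abs (α * |c|)
  have hZabs : ∫ ω, |Zf ω| ∂μ ≤ ∑ w, Real.sqrt (∑ r ∈ G w, (coef w r) ^ 2) := by
    have h1 : ∫ ω, |Zf ω| ∂μ ≤ ∫ ω, ∑ w, |Y w ω| ∂μ := by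
      refine integral_mono hZint.abs (integrable_finset_sum _ fun w _ => (hYint w).abs) ?_
      intro ω; exact Finset.abs_sum_le_sum_abs _ _
    rw [integral_finset_sum _ fun w _ => (hYint w).abs] at h1
    exact h1.trans (Finset.sum_le_sum fun w _ => hEabsY w)
  have hGsum : ∀ w, (∑ r ∈ G w, (coef w r) ^ 2)
      = ∑ t ∈ F w, ∑ p, (kbar (u, w) p) ^ 2 * (qbar (t, n) p) ^ 2 := by
    intro w
    rw [hGdef]
    rw [Finset.sum_product]
    exact Finset.sum_congr rfl fun t _ => Finset.sum_congr rfl fun p _ => by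
      simp only [hcoefdef]; rw [mul_pow]
  have hRHS : (∑ w : Fin N, Real.sqrt (∑ t ∈ F w, 1 / Xi D α c (kbar (u, w)) (qbar (t, n))))
      = (∑ w, Real.sqrt (∑ r ∈ G w, (coef w r) ^ 2)) / (α * |c|) := by
    rw [Finset.sum_div]
    refine Finset.sum_congr rfl fun w _ => ?_
    have h1 : ∀ t, (1 : ℝ) / Xi D α c (kbar (u, w)) (qbar (t, n))
        = (∑ p, (kbar (u, w) p) ^ 2 * (qbar (t, n) p) ^ 2) / (α ^ 2 * c ^ 2) := by
      intro t; rw [Xi, one_div, inv_div]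
    rw [Finset.sum_congr rfl fun t _ => h1 t, ← Finset.sum_div,
      Real.sqrt_div (by positivity) _, hGsum w]
    congr 1
    rw [show α ^ 2 * c ^ 2 = (α * |c|) ^ 2 from by rw [mul_pow, sq_abs],
      Real.sqrt_sq habspos.le]
  have hfin : (μ {ω | α * |c| ≤ |Zf ω|}).toReal
      ≤ ∑ w : Fin N, Real.sqrt (∑ t ∈ F w, 1 / Xi D α c (kbar (u, w)) (qbar (t, n))) := by
    rw [hRHS, le_div_iff₀ habspos, mul_comm]
    exact hmark.trans hZabs
  calc μ {ω | (∑ d, (∑ w, kbar (u, w) d * a (u, w) ω d) *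
          (∑ t, qbar (t, n) d * a (t, n) ω d)) ∉
        (fun s => s * c) '' Set.Icc (1 - α) (1 + α)}
      ≤ μ {ω | α * |c| ≤ |Zf ω|} := measure_mono hsub
    _ = ENNReal.ofReal ((μ {ω | α * |c| ≤ |Zf ω|}).toReal) :=
        (ENNReal.ofReal_toReal (measure_ne_top μ _)).symm
    _ ≤ _ := ENNReal.ofReal_le_ofReal hfin
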